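/- arXiv:1610.00238 — 2 statements merged into one kernel-verified Lean document; each statement's English description precedes it below -/
import Mathlib

section
/- Let m ≥ 2, n ≥ 2, and let f be a maximal IC-coloring of K_{1(n),m} with vertices listed as u_1, …, u_{m+n} so that f(u_i) < f(u_{i+1}) for all i; set f_i = f(u_1) + ⋯ + f(u_i). Then f_i ≥ 3 · 2^{i−2} for every i with 2 ≤ i ≤ m+n. -/
/-- The join `H₀ ∨ H₁` of two graphs: all edges of `H₀`, all edges of `H₁`, and all
pairs with one endpoint in each. -/
def graphJoin {α β : Type*} (G : SimpleGraph α) (H : SimpleGraph β) :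
    SimpleGraph (α ⊕ β) where
  Adj x y :=
    match x, y with
    | Sum.inl a, Sum.inl b => G.Adj a b
    | Sum.inr a, Sum.inr b => H.Adj a b
    | Sum.inl _, Sum.inr _ => True
    | Sum.inr _, Sum.inl _ => True
  symm := by
    constructor
    rintro (a | a) (b | b) h
    · exact G.adj_symm h
    · trivial
    · trivial
    · exact H.adj_symm h
  loopless := by
    constructor
    rintro (a | a) h
    · exact G.loopless.irrefl a h
    · exact H.loopless.irrefl a h

/-- A coloring `f : V(G) → ℕ` (positive-valued) is an IC-coloring if every integer
`k` with `1 ≤ k ≤ f(G)` is the `f`-sum of some nonempty vertex subset inducing a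
connected subgraph. -/
def IsICColoring {α : Type*} [Fintype α] (G : SimpleGraph α) (f : α → ℕ) : Prop :=
  (∀ v, 0 < f v) ∧
    ∀ k : ℕ, 1 ≤ k → k ≤ ∑ v, f v →
      ∃ S : Finset α, S.Nonempty ∧ (G.induce (S : Set α)).Connected ∧
        ∑ v ∈ S, f v = k

/-- The IC-index `M(G)`: the maximum of `f(G)` over all IC-colorings `f` of `G`. -/
noncomputable def ICIndex {α : Type*} [Fintype α] (G : SimpleGraph α) : ℕ :=
  sSup {t | ∃ f : α → ℕ, IsICColoring G f ∧ ∑ v, f v = t}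

/-- `K_{1(n),m} = O_m ∨ K_n`: the complete `(n+1)`-partite graph with `n` parts of
size one and one part (`V₀ = Fin m`, the left summand) of size `m`. -/
def K1nm (m n : ℕ) : SimpleGraph (Fin m ⊕ Fin n) :=
  graphJoin (⊥ : SimpleGraph (Fin m)) (⊤ : SimpleGraph (Fin n))

/-!
Once the vertices are listed by increasing colour, the value `f_i + 1` must be the colour sum of a
connected set, which cannot lie inside `{u_1, …, u_i}`; so it contains a vertex of colour at least
`f(u_{i+1})`, giving `f_{i+1} ≤ 2 f_i + 1`. Halving back from `f_{m+n} = M(K_{1(n),m})` therefore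
reduces the claim to the lower bound `M(K_{1(n),m}) ≥ 2^m (2^n - 1) ≥ 3 · 2^{m+n-2}`, which is
witnessed by giving the clique vertices the colours `2^i` and the independent vertices the colours
`2^j (2^n - 1)`.
-/

open Finset

theorem Nat.exists_finset_sum_two_pow_eq {k q : ℕ} (hq : q < 2 ^ k) :
    ∃ s : Finset (Fin k), ∑ i ∈ s, 2 ^ (i : ℕ) = q := by
  refine ⟨univ.filter fun i : Fin k => q.testBit i, ?_⟩
  have hbits : (univ.filter fun i : Fin k => q.testBit i).map Fin.valEmbedding =
      q.bitIndices.toFinset := by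
    ext j
    simp only [mem_map, mem_filter, mem_univ, true_and, Fin.valEmbedding_apply,
      List.mem_toFinset, Nat.mem_bitIndices]
    refine ⟨fun ⟨i, hi, hij⟩ => hij ▸ hi, fun hj => ⟨⟨j, ?_⟩, hj, rfl⟩⟩
    exact (Nat.pow_lt_pow_iff_right (by norm_num)).mp ((Nat.ge_two_pow_of_testBit hj).trans_lt hq)
  have := Finset.sum_toFinset_bitIndices_two_pow q
  rwa [← hbits, sum_map] at this

theorem sum_Icc_comp_of_bijOn {α M : Type*} [Fintype α] [AddCommMonoid M] {f : α → M}
    {u : ℕ → α} {N : ℕ} (hu : Set.BijOn u (Set.Icc 1 N) Set.univ) :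
    ∑ k ∈ Icc 1 N, f (u k) = ∑ v, f v :=
  sum_nbij u (fun _ _ => mem_univ _) (by simpa using hu.injOn)
    (by simpa using hu.surjOn) fun _ _ => rfl

theorem Fin.sum_univ_two_pow (k : ℕ) : ∑ i : Fin k, 2 ^ (i : ℕ) = 2 ^ k - 1 := by
  rw [Fin.sum_univ_eq_sum_range (2 ^ ·), Nat.geomSum_eq le_rfl]
  simp

theorem mul_two_pow_sub_le_of_le_two_mul_add_one {a : ℕ → ℕ} {c k N : ℕ}
    (hstep : ∀ i, k ≤ i → i < N → a (i + 1) ≤ 2 * a i + 1) (hN : c * 2 ^ (N - k) ≤ a N)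
    {i : ℕ} (hki : k ≤ i) (hiN : i ≤ N) : c * 2 ^ (i - k) ≤ a i := by
  refine Nat.decreasingInduction' (fun j hjN hij ih => ?_) hiN hN
  have hpow : 2 ^ (j + 1 - k) = 2 * 2 ^ (j - k) := by
    rw [Nat.sub_add_comm (hki.trans hij), pow_succ']
  have := hstep j (hki.trans hij) hjN
  rw [hpow, mul_left_comm] at ih
  omega

section ICColoring

variable {α : Type*} [Fintype α] {G : SimpleGraph α} {f : α → ℕ}

theorem IsICColoring.sum_lt_two_pow_card (hf : IsICColoring G f) :
    ∑ v, f v < 2 ^ Fintype.card α := by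
  classical
  have hsums : range (∑ v, f v + 1) ⊆ univ.image fun S : Finset α => ∑ v ∈ S, f v := by
    intro k hk
    rcases Nat.eq_zero_or_pos k with rfl | hk0
    · exact mem_image.mpr ⟨∅, mem_univ _, sum_empty⟩
    · obtain ⟨S, -, -, hS⟩ := hf.2 k hk0 (Nat.lt_succ_iff.mp (mem_range.mp hk))
      exact mem_image.mpr ⟨S, mem_univ _, hS⟩
  have := (card_le_card hsums).trans card_image_le
  rwa [card_range, card_univ, Fintype.card_finset, Nat.succ_le_iff] at this

theorem IsICColoring.sum_le_ICIndex (hf : IsICColoring G f) : ∑ v, f v ≤ ICIndex G :=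
  le_csSup ⟨2 ^ Fintype.card α, by rintro _ ⟨g, hg, rfl⟩; exact hg.sum_lt_two_pow_card.le⟩
    ⟨f, hf, rfl⟩

theorem IsICColoring.exists_notMem_le_sum_add_one (hf : IsICColoring G f) {A : Finset α}
    (hA : ∑ v ∈ A, f v < ∑ v, f v) : ∃ v ∉ A, f v ≤ ∑ w ∈ A, f w + 1 := by
  obtain ⟨S, -, -, hS⟩ := hf.2 _ le_add_self hA
  have hSA : ¬ S ⊆ A := fun hSA => by
    have := sum_le_sum_of_subset hSA (f := f)
    omega
  obtain ⟨v, hvS, hvA⟩ := not_subset.mp hSA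
  exact ⟨v, hvA, hS ▸ single_le_sum (fun _ _ => Nat.zero_le _) hvS⟩

theorem IsICColoring.le_sum_Icc_add_one (hf : IsICColoring G f) {u : ℕ → α} {N : ℕ}
    (hu : Set.BijOn u (Set.Icc 1 N) Set.univ) (hmono : MonotoneOn (f ∘ u) (Set.Icc 1 N))
    {i : ℕ} (hi : i < N) : f (u (i + 1)) ≤ ∑ k ∈ Icc 1 i, f (u k) + 1 := by
  classical
  have hinj : Set.InjOn u (Icc 1 i) :=
    hu.injOn.mono (by rw [coe_Icc]; exact Set.Icc_subset_Icc_right hi.le)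
  have hsumA : ∑ v ∈ (Icc 1 i).image u, f v = ∑ k ∈ Icc 1 i, f (u k) := sum_image hinj
  have hnext : u (i + 1) ∉ (Icc 1 i).image u := by
    rintro hmem
    obtain ⟨j, hj, hji⟩ := mem_image.mp hmem
    rw [mem_Icc] at hj
    have : j = i + 1 := hu.injOn ⟨hj.1, by omega⟩ ⟨by omega, hi⟩ hji
    omega
  have hA : ∑ v ∈ (Icc 1 i).image u, f v < ∑ v, f v :=
    sum_lt_sum_of_subset (subset_univ _) (mem_univ _) hnext (hf.1 _)
      fun _ _ _ => Nat.zero_le _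
  obtain ⟨v, hvA, hv⟩ := hf.exists_notMem_le_sum_add_one hA
  obtain ⟨j, hj, rfl⟩ := hu.surjOn (Set.mem_univ v)
  have hij : i + 1 ≤ j := by
    by_contra! hji
    exact hvA (mem_image.mpr ⟨j, mem_Icc.mpr ⟨hj.1, by omega⟩, rfl⟩)
  rw [hsumA] at hv
  exact (hmono ⟨by omega, hi⟩ hj hij).trans hv

end ICColoring

theorem SimpleGraph.induce_connected_of_forall_adj {V : Type*} {G : SimpleGraph V}
    {s : Set V} {v : V} (hv : v ∈ s) (hadj : ∀ w ∈ s, w ≠ v → G.Adj w v) :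
    (G.induce s).Connected := by
  have hreach : ∀ w : s, (G.induce s).Reachable w ⟨v, hv⟩ := by
    rintro ⟨w, hw⟩
    by_cases hwv : w = v
    · subst hwv; rfl
    · exact SimpleGraph.Adj.reachable (hadj w hw hwv)
  exact (SimpleGraph.connected_iff _).mpr
    ⟨fun x y => (hreach x).trans (hreach y).symm, ⟨⟨v, hv⟩⟩⟩

namespace K1nm

theorem adj_inr {m n : ℕ} {v : Fin m ⊕ Fin n} {i : Fin n} (h : v ≠ Sum.inr i) :
    (K1nm m n).Adj v (Sum.inr i) := by
  rcases v with _ | b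
  · trivial
  · exact fun hbi => h (congrArg Sum.inr hbi)

def binaryColoring (m n : ℕ) : Fin m ⊕ Fin n → ℕ :=
  Sum.elim (fun j => 2 ^ (j : ℕ) * (2 ^ n - 1)) fun i => 2 ^ (i : ℕ)

theorem sum_binaryColoring (m n : ℕ) : ∑ v, binaryColoring m n v = 2 ^ m * (2 ^ n - 1) := by
  have hm : 1 ≤ 2 ^ m := Nat.one_le_two_pow
  simp only [binaryColoring, Fintype.sum_sum_type, Sum.elim_inl, Sum.elim_inr, ← sum_mul,
    Fin.sum_univ_two_pow]
  rw [Nat.sub_mul, one_mul, Nat.sub_add_cancel (Nat.le_mul_of_pos_left _ hm)]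

/-- The colour sum `k` is realised as `q (2^n - 1) + r` with `1 ≤ r ≤ 2^n - 1`, taking the
binary digits of `q` among the independent vertices and those of `r` among the clique vertices;
the clique vertices chosen are nonempty, which makes the set connected. -/
theorem isICColoring_binaryColoring (m : ℕ) {n : ℕ} (hn : 1 ≤ n) :
    IsICColoring (K1nm m n) (binaryColoring m n) := by
  have hd : 0 < 2 ^ n - 1 := Nat.sub_pos_of_lt (Nat.one_lt_two_pow (by omega))
  refine ⟨fun v => ?_, fun k hk1 hk => ?_⟩
  · rcases v with j | i
    · exact Nat.mul_pos (Nat.two_pow_pos _) hd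
    · exact Nat.two_pow_pos _
  rw [sum_binaryColoring] at hk
  have hq : (k - 1) / (2 ^ n - 1) < 2 ^ m := (Nat.div_lt_iff_lt_mul hd).mpr (by omega)
  have hr : (k - 1) % (2 ^ n - 1) + 1 < 2 ^ n := by have := Nat.mod_lt (k - 1) hd; omega
  obtain ⟨sL, hsL⟩ := Nat.exists_finset_sum_two_pow_eq hq
  obtain ⟨sR, hsR⟩ := Nat.exists_finset_sum_two_pow_eq hr
  obtain ⟨i, hi⟩ : sR.Nonempty := nonempty_iff_ne_empty.mpr fun h => by simp [h] at hsR
  refine ⟨sL.disjSum sR, ⟨Sum.inr i, inr_mem_disjSum.mpr hi⟩,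
    SimpleGraph.induce_connected_of_forall_adj (inr_mem_disjSum.mpr hi) fun w _ hw => adj_inr hw,
    ?_⟩
  simp only [sum_disjSum, binaryColoring, Sum.elim_inl, Sum.elim_inr, ← sum_mul, hsL, hsR]
  have := Nat.div_add_mod (k - 1) (2 ^ n - 1)
  rw [mul_comm] at this
  omega

theorem three_mul_two_pow_le_ICIndex (m : ℕ) {n : ℕ} (hn : 2 ≤ n) :
    3 * 2 ^ (m + n - 2) ≤ ICIndex (K1nm m n) := by
  refine le_trans ?_ (isICColoring_binaryColoring m (by omega)).sum_le_ICIndex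
  obtain ⟨n, rfl⟩ := Nat.exists_eq_add_of_le' hn
  have : 1 ≤ 2 ^ n := Nat.one_le_two_pow
  calc 3 * 2 ^ (m + (n + 2) - 2) = 2 ^ m * (3 * 2 ^ n) := by
        rw [show m + (n + 2) - 2 = m + n by omega, pow_add]; ring
    _ ≤ 2 ^ m * (2 ^ (n + 2) - 1) := Nat.mul_le_mul_left _ (by rw [pow_add]; omega)
    _ = ∑ v, binaryColoring m (n + 2) v := (sum_binaryColoring m (n + 2)).symm

end K1nm

theorem stmt_12_general (m n : ℕ) (hn : 2 ≤ n)
    (f : Fin m ⊕ Fin n → ℕ) (hf : IsICColoring (K1nm m n) f)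
    (hmax : ∑ v, f v = ICIndex (K1nm m n))
    (u : ℕ → Fin m ⊕ Fin n) (hu : Set.BijOn u (Set.Icc 1 (m + n)) Set.univ)
    (hmono : ∀ i, 1 ≤ i → i + 1 ≤ m + n → f (u i) < f (u (i + 1))) :
    ∀ i, 2 ≤ i → i ≤ m + n →
      3 * 2 ^ (i - 2) ≤ ∑ k ∈ Finset.Icc 1 i, f (u k) := by
  have hmonoOn : MonotoneOn (f ∘ u) (Set.Icc 1 (m + n)) :=
    (strictMonoOn_of_lt_add_one Set.ordConnected_Icc
      fun i _ hi hi' => hmono i hi.1 hi'.2).monotoneOn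
  have htotal : 3 * 2 ^ (m + n - 2) ≤ ∑ k ∈ Icc 1 (m + n), f (u k) := by
    rw [sum_Icc_comp_of_bijOn hu, hmax]
    exact K1nm.three_mul_two_pow_le_ICIndex m hn
  intro i h2i hiN
  refine mul_two_pow_sub_le_of_le_two_mul_add_one (a := fun i => ∑ k ∈ Icc 1 i, f (u k))
    (fun j hj hjN => ?_) htotal h2i hiN
  have := hf.le_sum_Icc_add_one hu hmonoOn hjN
  rw [sum_Icc_succ_top (by omega)]
  omega

/-- Let `m, n ≥ 2` and `f` a maximal IC-coloring of `K_{1(n),m}`,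
with vertices listed as `u 1, …, u (m+n)` so that `f` is strictly increasing along
the list; write `fᵢ = ∑_{k=1}^{i} f (u k)`.  Then `fᵢ ≥ 3 · 2^{i−2}` for all
`2 ≤ i ≤ m + n`. -/
theorem stmt_12 (m n : ℕ) (hm : 2 ≤ m) (hn : 2 ≤ n)
    (f : Fin m ⊕ Fin n → ℕ) (hf : IsICColoring (K1nm m n) f)
    (hmax : ∑ v, f v = ICIndex (K1nm m n))
    (u : ℕ → Fin m ⊕ Fin n) (hu : Set.BijOn u (Set.Icc 1 (m + n)) Set.univ)
    (hmono : ∀ i, 1 ≤ i → i + 1 ≤ m + n → f (u i) < f (u (i + 1))) :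
    ∀ i, 2 ≤ i → i ≤ m + n →
      3 * 2 ^ (i - 2) ≤ ∑ k ∈ Finset.Icc 1 i, f (u k) :=
  stmt_12_general m n hn f hf hmax u hu hmono
end

section
/- Let m ≥ 2, n ≥ 2, and let f be a maximal IC-coloring of K_{1(n),m} with vertices listed as u_1, …, u_{m+n} so that f(u_i) < f(u_{i+1}) for all i; set f_0 = 0, f_i = f(u_1) + ⋯ + f(u_i), s_0 = 0, s_i = f(u_i), r_i = s_i − ∑_{j=0}^{i−1} s_j, and k_0 = max{ j : u_j ∈ V_0 }. Suppose S_1 = { i < k_0 : r_i = 1 and u_i ∈ V_0 } is nonempty; let i_1 = min S_1, t = |{ i < i_1 : u_i ∈ V_0 }|, and S_2 = { i ≥ i_1 + 1 : u_i ∈ V_0 and f(u_i) > f_{i−1} − f(u_{i_1}) }. If S_2 is empty, then f(K_{1(n),m}) ≤ 2^{m+n} − 2^m + 1. -/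
/-!
Listing the colours increasingly, the IC property forces `f(u_i) ≤ f_{i-1} + 1`: the value
`f(u_i) - 1` is the sum of a set of strictly smaller colours. So `f_i + 1` at most doubles at each
step. A vertex of `V₀` before `i₁` has `r_i ≠ 1` by minimality of `i₁`, hence
`f(u_i) ≤ f_{i-1}`, and one after `i₁` has `f(u_i) ≤ f_{i-1} - 1` because `S₂ = ∅`. Each such
step doubles the slack, which gives the invariant `f_i ≤ 2^i - 2^{c_i} + [i₁ ≤ i]`, where `c_i`
counts the vertices of `V₀` among `u_1, …, u_i`.
-/

open Finset

theorem strictMonoOn_Icc_of_lt_add_one {β : Type*} [Preorder β] {g : ℕ → β} {a b : ℕ}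
    (hg : ∀ i, a ≤ i → i + 1 ≤ b → g i < g (i + 1)) : StrictMonoOn g (Set.Icc a b) :=
  strictMonoOn_of_lt_succ Set.ordConnected_Icc fun i _ hi hi' => by
    simp only [Order.succ_eq_add_one, Set.mem_Icc] at hi hi' ⊢
    exact hg i hi.1 hi'.2

theorem sum_range_eq_sum_Icc_one {M : Type*} [AddCommMonoid M] {s : ℕ → M} (hs0 : s 0 = 0)
    (i : ℕ) : ∑ j ∈ range i, s j = ∑ j ∈ Icc 1 (i - 1), s j := by
  refine (sum_subset (fun k hk => mem_range.2 (by simp at hk; omega)) fun k hk hk' => ?_).symm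
  obtain rfl : k = 0 := by simp at hk hk'; omega
  exact hs0

theorem Set.BijOn.sum_comp {ι α M : Type*} [Fintype α] [AddCommMonoid M] {u : ι → α}
    {s : Finset ι} (hu : Set.BijOn u s Set.univ) (g : α → M) :
    ∑ k ∈ s, g (u k) = ∑ v, g v :=
  sum_nbij u (fun _ _ => Finset.mem_univ _) hu.injOn (by simpa using hu.surjOn) fun _ _ => rfl

theorem Set.BijOn.card_filter_isLeft {ι α β : Type*} [Fintype α] [Fintype β]
    {u : ι → α ⊕ β} {s : Finset ι} (hu : Set.BijOn u s Set.univ) :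
    #{k ∈ s | (u k).isLeft = true} = Fintype.card α := by
  rw [card_filter, hu.sum_comp fun v => if v.isLeft = true then 1 else 0, Fintype.sum_sum_type]
  simp

theorem IsICColoring.apply_le_sum_lt_add_one {α : Type*} [Fintype α] {G : SimpleGraph α}
    {f : α → ℕ} (hf : IsICColoring G f) (v : α) :
    f v ≤ ∑ w with f w < f v, f w + 1 := by
  by_contra! h
  obtain ⟨S, -, -, hS⟩ := hf.2 (f v - 1) (by omega)
    ((Nat.sub_le _ _).trans (single_le_sum (fun _ _ => Nat.zero_le _) (mem_univ v)))
  have hsub : S ⊆ ({w | f w < f v} : Finset α) := fun w hw => by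
    have := single_le_sum (fun _ _ => Nat.zero_le _) hw (f := f)
    exact mem_filter.2 ⟨mem_univ w, by omega⟩
  have := sum_le_sum_of_subset hsub (f := f)
  omega

theorem IsICColoring.apply_le_sum_Icc_add_one {α : Type*} [Fintype α] {G : SimpleGraph α}
    {f : α → ℕ} (hf : IsICColoring G f) {u : ℕ → α} {N : ℕ}
    (hu : Set.SurjOn u (Set.Icc 1 N) Set.univ) (hmono : MonotoneOn (f ∘ u) (Set.Icc 1 N))
    {i : ℕ} (hi : i ∈ Set.Icc 1 N) :
    f (u i) ≤ ∑ k ∈ Icc 1 (i - 1), f (u k) + 1 := by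
  classical
  refine (hf.apply_le_sum_lt_add_one (u i)).trans (Nat.add_le_add_right ?_ 1)
  calc ∑ w with f w < f (u i), f w ≤ ∑ w ∈ (Icc 1 (i - 1)).image u, f w := by
        refine sum_le_sum_of_subset fun w hw => ?_
        obtain ⟨j, hj, rfl⟩ := hu (Set.mem_univ w)
        have hji : j < i := by
          by_contra! h
          exact (mem_filter.1 hw).2.not_ge (hmono hi hj h)
        exact mem_image_of_mem u (mem_Icc.2 ⟨hj.1, by omega⟩)
    _ ≤ ∑ k ∈ Icc 1 (i - 1), f (u k) := sum_image_le_of_nonneg fun _ _ => Nat.zero_le _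

theorem sum_Icc_le_two_pow_sub_two_pow {a : ℕ → ℤ} {P : ℕ → Prop} [DecidablePred P] {N p : ℕ}
    (hp : 1 ≤ p) (hPp : P p)
    (hle : ∀ i ∈ Icc 1 N, a i ≤ ∑ k ∈ Icc 1 (i - 1), a k + 1)
    (hbefore : ∀ i ∈ Icc 1 N, P i → i < p → a i ≤ ∑ k ∈ Icc 1 (i - 1), a k)
    (hafter : ∀ i ∈ Icc 1 N, P i → p < i → a i + 1 ≤ ∑ k ∈ Icc 1 (i - 1), a k) :
    ∀ i ≤ N, ∑ k ∈ Icc 1 i, a k ≤ 2 ^ i - 2 ^ #{k ∈ Icc 1 i | P k} + if p ≤ i then 1 else 0 := by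
  intro i
  induction i with
  | zero => simp [show p ≠ 0 by omega]
  | succ i ih =>
    intro hi
    have hmem : i + 1 ∈ Icc 1 N := mem_Icc.2 ⟨by omega, hi⟩
    specialize ih (by omega)
    have hcard :
        #{k ∈ Icc 1 (i + 1) | P k} = #{k ∈ Icc 1 i | P k} + if P (i + 1) then 1 else 0 := by
      rw [card_filter, card_filter, sum_Icc_succ_top (by omega)]
    have hc1 : (1 : ℤ) ≤ 2 ^ #{k ∈ Icc 1 i | P k} := one_le_pow₀ (by norm_num)
    have hc2 : p ≤ i → (2 : ℤ) ≤ 2 ^ #{k ∈ Icc 1 i | P k} := fun h =>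
      le_self_pow₀ (by norm_num) (card_pos.2 ⟨p, mem_filter.2 ⟨mem_Icc.2 ⟨hp, h⟩, hPp⟩⟩).ne'
    have hai := hle _ hmem
    rw [add_tsub_cancel_right] at hai
    rw [sum_Icc_succ_top (by omega), hcard, pow_succ]
    by_cases hP : P (i + 1)
    · simp only [hP, if_true, pow_succ]
      rcases lt_trichotomy (i + 1) p with hlt | rfl | hgt
      · have := hbefore _ hmem hP hlt
        simp only [add_tsub_cancel_right, if_neg (show ¬p ≤ i by omega),
          if_neg (show ¬p ≤ i + 1 by omega)] at this ih ⊢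
        linarith
      · simp only [if_neg (show ¬i + 1 ≤ i by omega), le_refl, if_true] at ih ⊢
        linarith
      · have := hafter _ hmem hP hgt
        simp only [add_tsub_cancel_right, if_pos (show p ≤ i by omega), if_pos hgt.le] at this ih ⊢
        linarith
    · simp only [hP, if_false, add_zero]
      have hpi : p ≠ i + 1 := by rintro rfl; exact hP hPp
      by_cases hpi' : p ≤ i
      · have := hc2 hpi'
        simp only [if_pos hpi', if_pos (hpi'.trans (Nat.le_succ i))] at ih ⊢
        linarith
      · simp only [if_neg hpi', if_neg (show ¬p ≤ i + 1 by omega)] at ih ⊢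
        linarith

theorem stmt_15_general (m n : ℕ)
    (f : Fin m ⊕ Fin n → ℕ) (hf : IsICColoring (K1nm m n) f)
    (u : ℕ → Fin m ⊕ Fin n) (hu : Set.BijOn u (Set.Icc 1 (m + n)) Set.univ)
    (hmono : ∀ i, 1 ≤ i → i + 1 ≤ m + n → f (u i) < f (u (i + 1)))
    (s r : ℕ → ℤ) (hs0 : s 0 = 0)
    (hs : ∀ i, 1 ≤ i → i ≤ m + n → s i = f (u i))
    (hr : ∀ i, 1 ≤ i → i ≤ m + n → r i = s i - ∑ j ∈ Finset.range i, s j)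
    (k₀ : ℕ)
    (i₁ : ℕ)
    (hi₁mem : 1 ≤ i₁ ∧ i₁ < k₀ ∧ r i₁ = 1 ∧ (u i₁).isLeft = true)
    (hi₁min : ∀ j, 1 ≤ j → j < k₀ → r j = 1 → (u j).isLeft = true → i₁ ≤ j)
    (hS₂empty : ∀ i, i₁ + 1 ≤ i → i ≤ m + n → (u i).isLeft = true →
      (f (u i) : ℤ) ≤ (∑ k ∈ Finset.Icc 1 (i - 1), (f (u k) : ℤ)) - f (u i₁)) :
    ∑ v, f v ≤ 2 ^ (m + n) - 2 ^ m + 1 := by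
  obtain ⟨hi₁, hi₁k₀, -, hi₁L⟩ := hi₁mem
  have hIC : ∀ i ∈ Icc 1 (m + n),
      (f (u i) : ℤ) ≤ ∑ k ∈ Icc 1 (i - 1), (f (u k) : ℤ) + 1 := fun i hi => by
    exact_mod_cast hf.apply_le_sum_Icc_add_one hu.surjOn
      (strictMonoOn_Icc_of_lt_add_one hmono).monotoneOn (by simpa using hi)
  have hbefore : ∀ i ∈ Icc 1 (m + n), (u i).isLeft = true → i < i₁ →
      (f (u i) : ℤ) ≤ ∑ k ∈ Icc 1 (i - 1), (f (u k) : ℤ) := by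
    intro i hi hL hlt
    obtain ⟨hi1, hiN⟩ := mem_Icc.1 hi
    have hr1 : r i ≠ 1 := fun h => (hi₁min i hi1 (by omega) h hL).not_gt hlt
    rw [hr i hi1 hiN, hs i hi1 hiN, sum_range_eq_sum_Icc_one hs0,
      sum_congr rfl fun k hk => hs k (mem_Icc.1 hk).1 (by simp at hk; omega)] at hr1
    have := hIC i hi
    omega
  have hafter : ∀ i ∈ Icc 1 (m + n), (u i).isLeft = true → i₁ < i →
      (f (u i) : ℤ) + 1 ≤ ∑ k ∈ Icc 1 (i - 1), (f (u k) : ℤ) := by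
    intro i hi hL hlt
    have := hS₂empty i hlt (mem_Icc.1 hi).2 hL
    have := hf.1 (u i₁)
    omega
  have hu' : Set.BijOn u (Icc 1 (m + n) : Finset ℕ) Set.univ := by rwa [coe_Icc]
  have key := sum_Icc_le_two_pow_sub_two_pow hi₁ hi₁L hIC hbefore hafter (m + n) le_rfl
  rw [hu'.sum_comp fun v => (f v : ℤ), hu'.card_filter_isLeft, Fintype.card_fin] at key
  have h2 : 2 ^ m ≤ 2 ^ (m + n) := Nat.pow_le_pow_right (by norm_num) (by omega)
  zify [h2]
  split_ifs at key <;> linarith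

/-- Setting as in Statement 14, suppose
`S₁ = { i < k₀ : r i = 1 and u i ∈ V₀ }` is nonempty, with minimum `i₁`, and let
`S₂ = { i ≥ i₁ + 1 : u i ∈ V₀ and f (u i) > f_{i−1} − f (u i₁) }`.
If `S₂ = ∅`, then `f(K_{1(n),m}) ≤ 2^{m+n} − 2^m + 1`. -/
theorem stmt_15 (m n : ℕ) (hm : 2 ≤ m) (hn : 2 ≤ n)
    (f : Fin m ⊕ Fin n → ℕ) (hf : IsICColoring (K1nm m n) f)
    (hmax : ∑ v, f v = ICIndex (K1nm m n))
    (u : ℕ → Fin m ⊕ Fin n) (hu : Set.BijOn u (Set.Icc 1 (m + n)) Set.univ)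
    (hmono : ∀ i, 1 ≤ i → i + 1 ≤ m + n → f (u i) < f (u (i + 1)))
    (s r : ℕ → ℤ) (hs0 : s 0 = 0)
    (hs : ∀ i, 1 ≤ i → i ≤ m + n → s i = f (u i))
    (hr : ∀ i, 1 ≤ i → i ≤ m + n → r i = s i - ∑ j ∈ Finset.range i, s j)
    (k₀ : ℕ) (hk₀mem : 1 ≤ k₀ ∧ k₀ ≤ m + n ∧ (u k₀).isLeft = true)
    (hk₀max : ∀ j, 1 ≤ j → j ≤ m + n → (u j).isLeft = true → j ≤ k₀)
    (i₁ : ℕ)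
    (hi₁mem : 1 ≤ i₁ ∧ i₁ < k₀ ∧ r i₁ = 1 ∧ (u i₁).isLeft = true)
    (hi₁min : ∀ j, 1 ≤ j → j < k₀ → r j = 1 → (u j).isLeft = true → i₁ ≤ j)
    (hS₂empty : ∀ i, i₁ + 1 ≤ i → i ≤ m + n → (u i).isLeft = true →
      (f (u i) : ℤ) ≤ (∑ k ∈ Finset.Icc 1 (i - 1), (f (u k) : ℤ)) - f (u i₁)) :
    ∑ v, f v ≤ 2 ^ (m + n) - 2 ^ m + 1 :=
  stmt_15_general m n f hf u hu hmono s r hs0 hs hr k₀ i₁ hi₁mem hi₁min hS₂empty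
end
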